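/- Let Φ be an OQW on k sites with degree of freedom n whose hitting probability series converge. Then for all sites i ≠ j and every positive semidefinite ρ ∈ M_n(ℂ): h_{ji}(ρ) = ∑_{l=1}^k h_{jl}((B l i) ρ (B l i)ᴴ), where by convention h_{jj}(σ) := Tr σ. -/

import Mathlib

/-!
Split each path `i = x₀, x₁, …, x_r = j` according to its first step `l = x₁`. For `l = j` it is
the single path of length one, contributing `Tr (B j i ρ (B j i)ᴴ)`. For `l ≠ j` the rest
`x₁, …, x_r` is a path from `l` hitting `j` for the first time at time `r - 1`, and its product
`C'` satisfies `C = C' * B l i`, so `Tr (C ρ Cᴴ) = Tr (C' (B l i ρ (B l i)ᴴ) C'ᴴ)`. Summability of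
the series for the states `B l i ρ (B l i)ᴴ` lets the finite sum over `l` pass through `∑'`.
-/

open Matrix
open scoped ComplexOrder

noncomputable section

abbrev Mn (n : ℕ) : Type := Matrix (Fin n) (Fin n) ℂ

/-- An open quantum random walk on `k` sites with degree of freedom `n`:
`∑ i, (B i j)ᴴ (B i j) = 1` for every `j`. -/
def IsOQW {n k : ℕ} (B : Fin k → Fin k → Mn n) : Prop :=
  ∀ j : Fin k, ∑ i : Fin k, (B i j)ᴴ * B i j = 1

/-- The product `B (x r) (x (r-1)) * ⋯ * B (x 1) (x 0)` along a path `x`. -/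
def pathProd {n k : ℕ} (B : Fin k → Fin k → Mn n) : (r : ℕ) → (Fin (r+1) → Fin k) → Mn n
  | 0, _ => 1
  | r+1, x => B (x (Fin.last (r+1))) (x (Fin.last r).castSucc) *
      pathProd B r (fun s => x s.castSucc)

/-- The index set of `π(j ← i; r)`: paths `x_0 = i, x_1, …, x_r = j` with `x_s ≠ j`
for `1 ≤ s ≤ r - 1`. -/
def pathsSet (k : ℕ) (j i : Fin k) (r : ℕ) : Finset (Fin (r+1) → Fin k) :=
  Finset.univ.filter fun x => x 0 = i ∧ x (Fin.last r) = j ∧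
    ∀ s : Fin (r+1), s ≠ 0 → s ≠ Fin.last r → x s ≠ j

/-- The hitting probability `h_{ji}(σ)`: `∑_{r ≥ 1} ∑_{C ∈ π(j←i;r)} Tr(C σ Cᴴ)`
for `j ≠ i`, with the convention `h_{jj}(σ) = Tr σ`. -/
def hitProb {n k : ℕ} (B : Fin k → Fin k → Mn n) (j i : Fin k) (σ : Mn n) : ℂ :=
  if j = i then σ.trace
  else ∑' r : ℕ, ∑ x ∈ pathsSet k j i (r+1),
    (pathProd B (r+1) x * σ * (pathProd B (r+1) x)ᴴ).trace

open Finset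

section

variable {n k : ℕ}

lemma mem_pathsSet {j i : Fin k} {r : ℕ} {x : Fin (r+1) → Fin k} :
    x ∈ pathsSet k j i r ↔ x 0 = i ∧ x (Fin.last r) = j ∧
      ∀ s : Fin (r+1), s ≠ 0 → s ≠ Fin.last r → x s ≠ j := by
  simp [pathsSet]

lemma pathsSet_one (j i : Fin k) : pathsSet k j i 1 = {![i, j]} := by
  ext x
  simp [mem_pathsSet, Fin.forall_fin_two, funext_iff, eq_comm]

lemma cons_mem_pathsSet_succ_succ {j i a : Fin k} {r : ℕ} {y : Fin (r+2) → Fin k} :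
    Fin.cons a y ∈ pathsSet k j i (r+2) ↔ a = i ∧ y 0 ≠ j ∧ y ∈ pathsSet k j (y 0) (r+1) := by
  simp only [mem_pathsSet, Fin.forall_fin_succ, Fin.cons_zero, Fin.cons_succ, ← Fin.succ_last]
  grind

lemma mem_pathsSet_succ_succ {j i : Fin k} {r : ℕ} {x : Fin (r+3) → Fin k} :
    x ∈ pathsSet k j i (r+2) ↔ x 0 = i ∧ x 1 ≠ j ∧ Fin.tail x ∈ pathsSet k j (x 1) (r+1) := by
  conv_lhs => rw [← Fin.cons_self_tail x]
  exact cons_mem_pathsSet_succ_succ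

lemma sum_pathsSet_succ_succ {M : Type*} [AddCommMonoid M] (j i : Fin k) (r : ℕ)
    (f : (Fin (r+3) → Fin k) → M) :
    ∑ x ∈ pathsSet k j i (r+2), f x
      = ∑ l ∈ univ.erase j, ∑ y ∈ pathsSet k j l (r+1), f (Fin.cons i y) := by
  rw [sum_sigma']
  refine sum_nbij' (fun x => ⟨x 1, Fin.tail x⟩) (fun p => Fin.cons i p.2) ?_ ?_ ?_ ?_ ?_
  · intro x hx
    obtain ⟨-, hx1, hxt⟩ := mem_pathsSet_succ_succ.1 hx
    simpa [hx1] using hxt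
  · rintro ⟨l, y⟩ hy
    obtain ⟨hl, hy⟩ := mem_sigma.1 hy
    obtain rfl : y 0 = l := (mem_pathsSet.1 hy).1
    exact cons_mem_pathsSet_succ_succ.2 ⟨rfl, ne_of_mem_erase hl, hy⟩
  · intro x hx
    obtain ⟨rfl, -⟩ := mem_pathsSet_succ_succ.1 hx
    exact Fin.cons_self_tail x
  · rintro ⟨l, y⟩ hy
    obtain rfl : y 0 = l := (mem_pathsSet.1 (mem_sigma.1 hy).2).1
    simp
  · intro x hx
    obtain ⟨rfl, -⟩ := mem_pathsSet_succ_succ.1 hx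
    rw [Fin.cons_self_tail]

variable (B : Fin k → Fin k → Mn n)

lemma pathProd_cons (i : Fin k) :
    ∀ (r : ℕ) (y : Fin (r+1) → Fin k),
      pathProd B (r+1) (Fin.cons i y) = pathProd B r y * B (y 0) i
  | 0, y => by simp [pathProd]
  | r+1, y => by
    have hinit : (fun s : Fin (r+2) => (Fin.cons i y : Fin (r+3) → Fin k) s.castSucc)
        = Fin.cons i (fun s => y s.castSucc) := by
      ext s; cases s using Fin.cases <;> simp
    rw [pathProd, hinit, pathProd_cons i r, pathProd, mul_assoc, ← Fin.succ_last (r+1),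
      ← Fin.succ_last r, ← Fin.succ_castSucc, Fin.cons_succ, Fin.cons_succ, Fin.castSucc_zero]

def firstHitProb (j i : Fin k) (r : ℕ) (σ : Mn n) : ℂ :=
  ∑ x ∈ pathsSet k j i r, (pathProd B r x * σ * (pathProd B r x)ᴴ).trace

lemma hitProb_self (j : Fin k) (σ : Mn n) : hitProb B j j σ = σ.trace :=
  if_pos rfl

lemma hitProb_of_ne {j i : Fin k} (h : j ≠ i) (σ : Mn n) :
    hitProb B j i σ = ∑' r : ℕ, firstHitProb B j i (r+1) σ :=
  if_neg h

lemma firstHitProb_one (j i : Fin k) (σ : Mn n) :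
    firstHitProb B j i 1 σ = (B j i * σ * (B j i)ᴴ).trace := by
  simp [firstHitProb, pathsSet_one, pathProd]

lemma firstHitProb_succ_succ (j i : Fin k) (r : ℕ) (σ : Mn n) :
    firstHitProb B j i (r+2) σ
      = ∑ l ∈ univ.erase j, firstHitProb B j l (r+1) (B l i * σ * (B l i)ᴴ) := by
  rw [firstHitProb, sum_pathsSet_succ_succ]
  refine sum_congr rfl fun l _ => sum_congr rfl fun y hy => ?_
  rw [pathProd_cons, (mem_pathsSet.1 hy).1]
  simp only [conjTranspose_mul, mul_assoc]

end

theorem hitProb_first_step_general {n k : ℕ} (B : Fin k → Fin k → Mn n)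
    (hconv : ∀ (j i : Fin k) (σ : Mn n), σ.PosSemidef →
      Summable fun r : ℕ => ∑ x ∈ pathsSet k j i (r+1),
        (pathProd B (r+1) x * σ * (pathProd B (r+1) x)ᴴ).trace) :
    ∀ i j : Fin k, i ≠ j → ∀ ρ : Mn n, ρ.PosSemidef →
      hitProb B j i ρ = ∑ l : Fin k, hitProb B j l (B l i * ρ * (B l i)ᴴ) := by
  intro i j hij ρ hρ
  have hsummable (l : Fin k) {σ : Mn n} (hσ : σ.PosSemidef) :
      Summable fun r => firstHitProb B j l (r+1) σ :=
    hconv j l σ hσ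
  calc hitProb B j i ρ = firstHitProb B j i 1 ρ + ∑' r, firstHitProb B j i (r+2) ρ := by
        rw [hitProb_of_ne B hij.symm, (hsummable i hρ).tsum_eq_zero_add]
    _ = (B j i * ρ * (B j i)ᴴ).trace +
          ∑ l ∈ univ.erase j, ∑' r, firstHitProb B j l (r+1) (B l i * ρ * (B l i)ᴴ) := by
        rw [firstHitProb_one, ← Summable.tsum_finsetSum fun l _ =>
          hsummable l (hρ.mul_mul_conjTranspose_same _)]
        simp only [firstHitProb_succ_succ]
    _ = ∑ l, hitProb B j l (B l i * ρ * (B l i)ᴴ) := by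
        rw [← add_sum_erase _ _ (mem_univ j), hitProb_self]
        congr 1
        exact sum_congr rfl fun l hl => (hitProb_of_ne B (ne_of_mem_erase hl).symm _).symm

/-- First-step identity for hitting probabilities of OQWs:
`h_{ji}(ρ) = ∑_l h_{jl}((B l i) ρ (B l i)ᴴ)` for all sites `i ≠ j` and all
positive semidefinite `ρ`, provided the hitting probability series converge. -/
theorem hitProb_first_step {n k : ℕ} (B : Fin k → Fin k → Mn n) (hB : IsOQW B)
    (hconv : ∀ (j i : Fin k) (σ : Mn n), σ.PosSemidef →
      Summable fun r : ℕ => ∑ x ∈ pathsSet k j i (r+1),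
        (pathProd B (r+1) x * σ * (pathProd B (r+1) x)ᴴ).trace) :
    ∀ i j : Fin k, i ≠ j → ∀ ρ : Mn n, ρ.PosSemidef →
      hitProb B j i ρ = ∑ l : Fin k, hitProb B j l (B l i * ρ * (B l i)ᴴ) :=
  hitProb_first_step_general B hconv

end
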